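/- arXiv:1503.03205 — 5 statements merged into one kernel-verified Lean document; each statement's English description precedes it below -/
import Mathlib

section
/- If G is a finite simple connected graph and e = uv is an edge of G such that G − e is still connected, then RDD(G) > RDD(G − e). -/
open Finset

open Classical in
/-- Reciprocal degree distance. -/
noncomputable def RDD {V : Type*} [Fintype V] (G : SimpleGraph V) : ℝ :=
  (∑ u : V, ∑ v : V, if u ≠ v then
      (((G.neighborSet u).ncard : ℝ) + ((G.neighborSet v).ncard : ℝ)) / (G.dist u v : ℝ)
    else 0) / 2

theorem rdd_deleteEdge_lt {V : Type*} [Fintype V] (G : SimpleGraph V) (u v : V)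
    (hconn : G.Connected) (huv : G.Adj u v)
    (hconn' : (G.deleteEdges {s(u, v)}).Connected) :
    RDD (G.deleteEdges {s(u, v)}) < RDD G := by
  classical
  set G' := G.deleteEdges {s(u, v)} with hG'
  have hle : G' ≤ G := G.deleteEdges_le _
  have hnsub : ∀ a : V, G'.neighborSet a ⊆ G.neighborSet a := fun a x hx => hle hx
  -- termwise inequality
  have key : ∀ a b : V,
      (if a ≠ b then (((G'.neighborSet a).ncard : ℝ) + ((G'.neighborSet b).ncard : ℝ)) /
        (G'.dist a b : ℝ) else 0) ≤
      (if a ≠ b then (((G.neighborSet a).ncard : ℝ) + ((G.neighborSet b).ncard : ℝ)) /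
        (G.dist a b : ℝ) else 0) := by
    intro a b
    by_cases hab : a = b
    · simp [hab]
    · simp only [if_pos hab, ne_eq, hab, not_false_eq_true]
      have hdpos : 0 < G.dist a b := hconn.pos_dist_of_ne hab
      have hdle : G.dist a b ≤ G'.dist a b :=
        SimpleGraph.Reachable.dist_anti hle (hconn' a b)
      have hca : (G'.neighborSet a).ncard ≤ (G.neighborSet a).ncard :=
        Set.ncard_le_ncard (hnsub a) (Set.toFinite _)
      have hcb : (G'.neighborSet b).ncard ≤ (G.neighborSet b).ncard :=
        Set.ncard_le_ncard (hnsub b) (Set.toFinite _)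
      apply div_le_div₀ (by positivity) (by push_cast; exact_mod_cast add_le_add hca hcb)
        (by exact_mod_cast hdpos) (by exact_mod_cast hdle)
  -- strict inequality at the pair (u, v)
  have hne : u ≠ v := huv.ne
  have keystrict :
      (if u ≠ v then (((G'.neighborSet u).ncard : ℝ) + ((G'.neighborSet v).ncard : ℝ)) /
        (G'.dist u v : ℝ) else 0) <
      (if u ≠ v then (((G.neighborSet u).ncard : ℝ) + ((G.neighborSet v).ncard : ℝ)) /
        (G.dist u v : ℝ) else 0) := by
    simp only [if_pos hne]
    have hdist1 : G.dist u v = 1 := SimpleGraph.dist_eq_one_iff_adj.mpr huv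
    have hnadj : ¬ G'.Adj u v := by
      rw [hG', SimpleGraph.deleteEdges_adj]
      simp
    have hssu : G'.neighborSet u ⊂ G.neighborSet u := by
      refine ⟨hnsub u, fun hsub => hnadj ?_⟩
      exact hsub huv
    have hca : (G'.neighborSet u).ncard < (G.neighborSet u).ncard :=
      Set.ncard_lt_ncard hssu (Set.toFinite _)
    have hcb : (G'.neighborSet v).ncard ≤ (G.neighborSet v).ncard :=
      Set.ncard_le_ncard (hnsub v) (Set.toFinite _)
    have hd'pos : 0 < G'.dist u v := hconn'.pos_dist_of_ne hne
    have h1 : (((G'.neighborSet u).ncard : ℝ) + ((G'.neighborSet v).ncard : ℝ)) /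
        (G'.dist u v : ℝ) ≤
        ((G'.neighborSet u).ncard : ℝ) + ((G'.neighborSet v).ncard : ℝ) :=
      div_le_self (by positivity) (by exact_mod_cast hd'pos)
    have h2 : ((G'.neighborSet u).ncard : ℝ) + ((G'.neighborSet v).ncard : ℝ) <
        ((G.neighborSet u).ncard : ℝ) + ((G.neighborSet v).ncard : ℝ) := by
      exact_mod_cast add_lt_add_of_lt_of_le hca hcb
    rw [hdist1]
    push_cast
    linarith
  -- sum it all up
  have hsum : (∑ a : V, ∑ b : V, if a ≠ b then
      (((G'.neighborSet a).ncard : ℝ) + ((G'.neighborSet b).ncard : ℝ)) / (G'.dist a b : ℝ)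
      else 0) <
      (∑ a : V, ∑ b : V, if a ≠ b then
      (((G.neighborSet a).ncard : ℝ) + ((G.neighborSet b).ncard : ℝ)) / (G.dist a b : ℝ)
      else 0) := by
    apply Finset.sum_lt_sum (fun a _ => Finset.sum_le_sum (fun b _ => key a b))
    refine ⟨u, Finset.mem_univ u, ?_⟩
    exact Finset.sum_lt_sum (fun b _ => key u b) ⟨v, Finset.mem_univ v, keystrict⟩
  unfold RDD
  linarith
end

section
/- If G is a finite simple connected graph and u, v are distinct nonadjacent vertices of G, then RDD(G) < RDD(G + uv). -/
open Finset

theorem rdd_addEdge_gt {V : Type*} [Fintype V] (G : SimpleGraph V) (u v : V)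
    (hconn : G.Connected) (hne : u ≠ v) (hnadj : ¬ G.Adj u v) :
    RDD G < RDD (G ⊔ SimpleGraph.fromEdgeSet {s(u, v)}) := by
  classical
  set G' := G ⊔ SimpleGraph.fromEdgeSet {s(u, v)} with hG'
  have hle : G ≤ G' := le_sup_left
  have hconn' : G'.Connected := hconn.mono hle
  have hadj' : G'.Adj u v := by
    simp [hG', SimpleGraph.fromEdgeSet_adj, hne]
  have hdeg : ∀ w : V, ((G.neighborSet w).ncard : ℝ) ≤ ((G'.neighborSet w).ncard : ℝ) := by
    intro w
    exact_mod_cast Set.ncard_le_ncard (fun z hz => hle hz) (Set.toFinite _)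
  have hdegnn : ∀ w : V, (0:ℝ) ≤ ((G.neighborSet w).ncard : ℝ) := fun w => by positivity
  have hdist : ∀ x y : V, G'.dist x y ≤ G.dist x y := by
    intro x y
    obtain ⟨p, hp⟩ := hconn.exists_walk_length_eq_dist x y
    calc G'.dist x y ≤ (p.mapLe hle).length := SimpleGraph.dist_le _
      _ = G.dist x y := by rw [SimpleGraph.Walk.length_map]; exact hp
  have hdistpos : ∀ x y : V, x ≠ y → (0:ℝ) < (G'.dist x y : ℝ) := by
    intro x y hxy
    exact_mod_cast hconn'.pos_dist_of_ne hxy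
  have hterm : ∀ x y : V,
      (if x ≠ y then (((G.neighborSet x).ncard : ℝ) + ((G.neighborSet y).ncard : ℝ)) /
        (G.dist x y : ℝ) else 0) ≤
      (if x ≠ y then (((G'.neighborSet x).ncard : ℝ) + ((G'.neighborSet y).ncard : ℝ)) /
        (G'.dist x y : ℝ) else 0) := by
    intro x y
    by_cases hxy : x ≠ y
    · rw [if_pos hxy, if_pos hxy]
      apply div_le_div₀ (by positivity) (add_le_add (hdeg x) (hdeg y)) (hdistpos x y hxy)
      exact_mod_cast hdist x y
    · rw [if_neg hxy, if_neg hxy]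
  have hstrict :
      (if u ≠ v then (((G.neighborSet u).ncard : ℝ) + ((G.neighborSet v).ncard : ℝ)) /
        (G.dist u v : ℝ) else 0) <
      (if u ≠ v then (((G'.neighborSet u).ncard : ℝ) + ((G'.neighborSet v).ncard : ℝ)) /
        (G'.dist u v : ℝ) else 0) := by
    rw [if_pos hne, if_pos hne]
    have hd1 : G'.dist u v = 1 := SimpleGraph.dist_eq_one_iff_adj.mpr hadj'
    have ha : ((G.neighborSet u).ncard : ℝ) + 1 ≤ ((G'.neighborSet u).ncard : ℝ) := by
      have hsub : insert v (G.neighborSet u) ⊆ G'.neighborSet u := by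
        intro z hz
        rcases Set.mem_insert_iff.mp hz with h | h
        · subst h; exact hadj'
        · exact hle h
      have hvn : v ∉ G.neighborSet u := hnadj
      have := Set.ncard_le_ncard hsub (Set.toFinite _)
      rw [Set.ncard_insert_of_notMem hvn (Set.toFinite _)] at this
      exact_mod_cast this
    have hb : ((G.neighborSet v).ncard : ℝ) + 1 ≤ ((G'.neighborSet v).ncard : ℝ) := by
      have hsub : insert u (G.neighborSet v) ⊆ G'.neighborSet v := by
        intro z hz
        rcases Set.mem_insert_iff.mp hz with h | h
        · subst h; exact hadj'.symm
        · exact hle h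
      have hun : u ∉ G.neighborSet v := fun h => hnadj (G.adj_symm h)
      have := Set.ncard_le_ncard hsub (Set.toFinite _)
      rw [Set.ncard_insert_of_notMem hun (Set.toFinite _)] at this
      exact_mod_cast this
    have hd : (1:ℝ) ≤ (G.dist u v : ℝ) := by
      exact_mod_cast hconn.pos_dist_of_ne hne
    calc (((G.neighborSet u).ncard : ℝ) + ((G.neighborSet v).ncard : ℝ)) / (G.dist u v : ℝ)
        ≤ ((G.neighborSet u).ncard : ℝ) + ((G.neighborSet v).ncard : ℝ) :=
          div_le_self (by positivity) hd
      _ < (((G.neighborSet u).ncard : ℝ) + 1) + (((G.neighborSet v).ncard : ℝ) + 1) := by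
          linarith
      _ ≤ ((G'.neighborSet u).ncard : ℝ) + ((G'.neighborSet v).ncard : ℝ) :=
          add_le_add ha hb
      _ = (((G'.neighborSet u).ncard : ℝ) + ((G'.neighborSet v).ncard : ℝ)) /
          (G'.dist u v : ℝ) := by rw [hd1]; simp
  unfold RDD
  rw [div_lt_div_iff_of_pos_right (by norm_num : (0:ℝ) < 2)]
  apply Finset.sum_lt_sum
  · intro x _
    exact Finset.sum_le_sum fun y _ => hterm x y
  · refine ⟨u, Finset.mem_univ u, ?_⟩
    apply Finset.sum_lt_sum
    · intro y _
      exact hterm u y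
    · exact ⟨v, Finset.mem_univ v, hstrict⟩
end

section
/- Let Ḡ_{n,k} be the graph obtained from the complete graph K_{n−k} by attaching k pendent vertices to a single vertex (where 0 ≤ k ≤ n−2). Then RDD(Ḡ_{n,k}) = n³ − (5k/2 + 2)n² + (2k² + 11k/2 + 1)n − (k³/2 + 2k² + 5k/2). -/
open Finset

/-- `Gbar n k`: the complete graph on the first `n - k` vertices of `Fin n`,
with the remaining `k` vertices attached as pendent vertices to vertex `0`. -/
def Gbar (n k : ℕ) : SimpleGraph (Fin n) :=
  SimpleGraph.fromRel (fun a b =>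
    (a.val < n - k ∧ b.val < n - k) ∨ (a.val = 0 ∧ n - k ≤ b.val))

lemma gbar_adj (n k : ℕ) (a b : Fin n) :
    (Gbar n k).Adj a b ↔ a ≠ b ∧ ((a.val < n - k ∧ b.val < n - k) ∨ (a.val = 0 ∧ n - k ≤ b.val)
      ∨ (b.val = 0 ∧ n - k ≤ a.val)) := by
  simp [Gbar, SimpleGraph.fromRel_adj]
  tauto

lemma card_filter_lt (n m : ℕ) (hm : m ≤ n) :
    (univ.filter fun b : Fin n => b.val < m).card = m := by
  rw [← Finset.card_range m]
  apply Finset.card_bij (fun a _ => a.val)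
  · intro a ha; simp at ha ⊢; omega
  · intro a ha b hb hab; exact Fin.ext hab
  · intro b hb; simp at hb; exact ⟨⟨b, by omega⟩, by simp [hb], rfl⟩

lemma card_filter_ge (n m : ℕ) (hm : m ≤ n) :
    (univ.filter fun b : Fin n => m ≤ b.val).card = n - m := by
  have := Finset.card_filter_add_card_filter_not (s := (univ : Finset (Fin n)))
    (p := fun b => b.val < m)
  simp only [not_lt] at this
  have h2 := card_filter_lt n m hm
  simp [Finset.card_univ] at this
  omega

section
variable {n k : ℕ} (h : k + 2 ≤ n)
include h

lemma deg_hub : ((Gbar n k).neighborSet ⟨0, by omega⟩).ncard = n - 1 := by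
  have : (Gbar n k).neighborSet ⟨0, by omega⟩ = ↑(univ.erase (⟨0, by omega⟩ : Fin n)) := by
    ext b
    simp [SimpleGraph.mem_neighborSet, gbar_adj, Fin.ext_iff, eq_comm]
    omega
  rw [this, Set.ncard_coe_finset, Finset.card_erase_of_mem (by simp), Finset.card_univ,
    Fintype.card_fin]

lemma deg_clique {u : Fin n} (hu0 : u.val ≠ 0) (hum : u.val < n - k) :
    ((Gbar n k).neighborSet u).ncard = n - k - 1 := by
  have : (Gbar n k).neighborSet u = ↑((univ.filter fun b : Fin n => b.val < n - k).erase u) := by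
    ext b
    simp [SimpleGraph.mem_neighborSet, gbar_adj, Fin.ext_iff, eq_comm]
    omega
  rw [this, Set.ncard_coe_finset, Finset.card_erase_of_mem (by simp [hum]),
    card_filter_lt n (n - k) (by omega)]

lemma deg_pendant {u : Fin n} (hu : n - k ≤ u.val) :
    ((Gbar n k).neighborSet u).ncard = 1 := by
  have : (Gbar n k).neighborSet u = {(⟨0, by omega⟩ : Fin n)} := by
    ext b
    simp [SimpleGraph.mem_neighborSet, gbar_adj, Fin.ext_iff, eq_comm]
    omega
  rw [this, Set.ncard_singleton]

end

lemma dist_two {V : Type*} (G : SimpleGraph V) {u v w : V} (huv : u ≠ v) (hna : ¬G.Adj u v)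
    (h1 : G.Adj u w) (h2 : G.Adj w v) : G.dist u v = 2 := by
  have hle : G.dist u v ≤ 2 := by
    have := G.dist_le (SimpleGraph.Walk.cons h1 (SimpleGraph.Walk.cons h2 SimpleGraph.Walk.nil))
    simpa using this
  have hr : G.Reachable u v := ⟨SimpleGraph.Walk.cons h1 (SimpleGraph.Walk.cons h2 SimpleGraph.Walk.nil)⟩
  have h0 : G.dist u v ≠ 0 := fun hh => huv (hr.dist_eq_zero_iff.mp hh)
  have h1' : G.dist u v ≠ 1 := fun hh => hna (SimpleGraph.dist_eq_one_iff_adj.mp hh)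
  omega

lemma sum_block {V : Type*} (s t : Finset V) (f : V → V → ℝ) (c : ℝ)
    (hf : ∀ u ∈ s, ∀ v ∈ t, f u v = c) :
    ∑ u ∈ s, ∑ v ∈ t, f u v = s.card * t.card * c := by
  rw [Finset.sum_congr rfl (fun u hu => Finset.sum_congr rfl (fun v hv => hf u hu v hv))]
  simp [Finset.sum_const, mul_assoc]

lemma sum_block_diag {V : Type*} [DecidableEq V] (s : Finset V) (f : V → V → ℝ) (c : ℝ)
    (hf : ∀ u ∈ s, ∀ v ∈ s, u ≠ v → f u v = c) (h0 : ∀ u ∈ s, f u u = 0) :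
    ∑ u ∈ s, ∑ v ∈ s, f u v = s.card * s.card * c - s.card * c := by
  have inner : ∀ u ∈ s, ∑ v ∈ s, f u v = ((s.card : ℝ) - 1) * c := by
    intro u hu
    rw [← Finset.add_sum_erase s (f u) hu, h0 u hu, zero_add,
      Finset.sum_congr rfl (fun v hv => hf u hu v (Finset.mem_of_mem_erase hv)
        (Ne.symm (Finset.ne_of_mem_erase hv))),
      Finset.sum_const, Finset.card_erase_of_mem hu]
    have : 1 ≤ s.card := Finset.card_pos.mpr ⟨u, hu⟩
    rw [nsmul_eq_mul, Nat.cast_sub this]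
    push_cast
    ring
  rw [Finset.sum_congr rfl inner, Finset.sum_const]
  push_cast
  ring_nf



theorem rdd_Gbar (n k : ℕ) (h : k + 2 ≤ n) :
    RDD (Gbar n k) =
      (n : ℝ) ^ 3 - (5 * (k : ℝ) / 2 + 2) * (n : ℝ) ^ 2
        + (2 * (k : ℝ) ^ 2 + 11 * (k : ℝ) / 2 + 1) * (n : ℝ)
        - ((k : ℝ) ^ 3 / 2 + 2 * (k : ℝ) ^ 2 + 5 * (k : ℝ) / 2) := by
  classical
  set hub : Fin n := ⟨0, by omega⟩ with hhub
  set A : Finset (Fin n) := {hub} with hA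
  set B : Finset (Fin n) := (univ.filter fun v : Fin n => v.val < n - k).erase hub with hB
  set P : Finset (Fin n) := univ.filter fun v : Fin n => n - k ≤ v.val with hPdef
  have hmemB : ∀ v : Fin n, v ∈ B ↔ v.val ≠ 0 ∧ v.val < n - k := by
    intro v; simp [hB, Fin.ext_iff, hhub]
  have hmemP : ∀ v : Fin n, v ∈ P ↔ n - k ≤ v.val := by
    intro v; simp [hPdef]
  have hdBP : Disjoint B P := by
    rw [Finset.disjoint_left]; intro a ha hb
    rw [hmemB] at ha; rw [hmemP] at hb; omega
  have hdA : Disjoint A (B ∪ P) := by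
    rw [Finset.disjoint_left]; intro a ha hb
    rw [hA, Finset.mem_singleton] at ha; subst ha
    rcases Finset.mem_union.mp hb with hb | hb
    · rw [hmemB] at hb; simp [hhub] at hb
    · rw [hmemP] at hb; simp [hhub] at hb; omega
  have hunion : A ∪ (B ∪ P) = univ := by
    ext v
    simp only [Finset.mem_union, Finset.mem_univ, iff_true, hA, Finset.mem_singleton,
      hmemB, hmemP]
    rcases Nat.eq_zero_or_pos v.val with hv | hv
    · exact Or.inl (Fin.ext (by simp [hhub, hv]))
    · right; omega
  have hsplit : ∀ g : Fin n → ℝ,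
      ∑ u : Fin n, g u = ∑ u ∈ A, g u + (∑ u ∈ B, g u + ∑ u ∈ P, g u) := by
    intro g
    rw [← Finset.sum_union hdBP, ← Finset.sum_union hdA, hunion]
  have hcardA : A.card = 1 := by rw [hA, Finset.card_singleton]
  have hcardB : B.card = n - k - 1 := by
    rw [hB, Finset.card_erase_of_mem (by simp [hhub]; omega), card_filter_lt n (n - k) (by omega)]
  have hcardP : P.card = k := by
    rw [hPdef, card_filter_ge n (n - k) (by omega)]; omega
  -- the five constants
  have main : ∀ f : Fin n → Fin n → ℝ,
      (∀ u : Fin n, f u u = 0) →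
      (∀ v ∈ B, f hub v = ((n - 1 : ℕ) : ℝ) + ((n - k - 1 : ℕ) : ℝ)) →
      (∀ v ∈ B, f v hub = ((n - 1 : ℕ) : ℝ) + ((n - k - 1 : ℕ) : ℝ)) →
      (∀ v ∈ P, f hub v = ((n - 1 : ℕ) : ℝ) + 1) →
      (∀ v ∈ P, f v hub = ((n - 1 : ℕ) : ℝ) + 1) →
      (∀ u ∈ B, ∀ v ∈ B, u ≠ v → f u v = ((n - k - 1 : ℕ) : ℝ) + ((n - k - 1 : ℕ) : ℝ)) →
      (∀ u ∈ B, ∀ v ∈ P, f u v = (((n - k - 1 : ℕ) : ℝ) + 1) / 2) →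
      (∀ u ∈ P, ∀ v ∈ B, f u v = (((n - k - 1 : ℕ) : ℝ) + 1) / 2) →
      (∀ u ∈ P, ∀ v ∈ P, u ≠ v → f u v = 1) →
      (∑ u : Fin n, ∑ v : Fin n, f u v) / 2 =
        (n : ℝ) ^ 3 - (5 * (k : ℝ) / 2 + 2) * (n : ℝ) ^ 2
          + (2 * (k : ℝ) ^ 2 + 11 * (k : ℝ) / 2 + 1) * (n : ℝ)
          - ((k : ℝ) ^ 3 / 2 + 2 * (k : ℝ) ^ 2 + 5 * (k : ℝ) / 2) := by
    intro f hdiag hAB hBA hAP hPA hBB hBP hPB hPP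
    have hmemA : ∀ u : Fin n, u ∈ A → u = hub := by
      intro u hu; rwa [hA, Finset.mem_singleton] at hu
    have eAA : ∑ u ∈ A, ∑ v ∈ A, f u v = (A.card : ℝ) * A.card * 0 :=
      sum_block A A f 0 (fun u hu v hv => by
        rw [hmemA u hu, hmemA v hv]; exact hdiag hub)
    have eAB : ∑ u ∈ A, ∑ v ∈ B, f u v
        = (A.card : ℝ) * B.card * (((n - 1 : ℕ) : ℝ) + ((n - k - 1 : ℕ) : ℝ)) :=
      sum_block _ _ _ _ (fun u hu v hv => by rw [hmemA u hu]; exact hAB v hv)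
    have eBA : ∑ u ∈ B, ∑ v ∈ A, f u v
        = (B.card : ℝ) * A.card * (((n - 1 : ℕ) : ℝ) + ((n - k - 1 : ℕ) : ℝ)) :=
      sum_block _ _ _ _ (fun u hu v hv => by rw [hmemA v hv]; exact hBA u hu)
    have eAP : ∑ u ∈ A, ∑ v ∈ P, f u v = (A.card : ℝ) * P.card * (((n - 1 : ℕ) : ℝ) + 1) :=
      sum_block _ _ _ _ (fun u hu v hv => by rw [hmemA u hu]; exact hAP v hv)
    have ePA : ∑ u ∈ P, ∑ v ∈ A, f u v = (P.card : ℝ) * A.card * (((n - 1 : ℕ) : ℝ) + 1) :=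
      sum_block _ _ _ _ (fun u hu v hv => by rw [hmemA v hv]; exact hPA u hu)
    have eBB : ∑ u ∈ B, ∑ v ∈ B, f u v
        = (B.card : ℝ) * B.card * (((n - k - 1 : ℕ) : ℝ) + ((n - k - 1 : ℕ) : ℝ))
          - (B.card : ℝ) * (((n - k - 1 : ℕ) : ℝ) + ((n - k - 1 : ℕ) : ℝ)) :=
      sum_block_diag _ _ _ hBB (fun u _ => hdiag u)
    have eBP : ∑ u ∈ B, ∑ v ∈ P, f u v
        = (B.card : ℝ) * P.card * ((((n - k - 1 : ℕ) : ℝ) + 1) / 2) :=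
      sum_block _ _ _ _ hBP
    have ePB : ∑ u ∈ P, ∑ v ∈ B, f u v
        = (P.card : ℝ) * B.card * ((((n - k - 1 : ℕ) : ℝ) + 1) / 2) :=
      sum_block _ _ _ _ hPB
    have ePP : ∑ u ∈ P, ∑ v ∈ P, f u v
        = (P.card : ℝ) * P.card * 1 - (P.card : ℝ) * 1 :=
      sum_block_diag _ _ _ hPP (fun u _ => hdiag u)
    simp only [hsplit, Finset.sum_add_distrib]
    rw [eAA, eAB, eBA, eAP, ePA, eBB, eBP, ePB, ePP, hcardA, hcardB, hcardP]
    have c1 : ((n - 1 : ℕ) : ℝ) = (n : ℝ) - 1 := by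
      rw [Nat.cast_sub (by omega)]; norm_num
    have c2 : ((n - k - 1 : ℕ) : ℝ) = (n : ℝ) - (k : ℝ) - 1 := by
      rw [Nat.cast_sub (by omega), Nat.cast_sub (by omega)]; norm_num
    rw [c1, c2]
    ring
  rw [RDD]
  refine main _ ?_ ?_ ?_ ?_ ?_ ?_ ?_ ?_ ?_
  · intro u; simp
  · -- hub to B
    intro v hv
    rw [hmemB] at hv
    have hne : hub ≠ v := by simp [hhub, Fin.ext_iff]; omega
    have hadj : (Gbar n k).Adj hub v :=
      (gbar_adj n k hub v).mpr ⟨hne, Or.inl ⟨by simp [hhub]; omega, hv.2⟩⟩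
    rw [if_pos hne, deg_hub h, deg_clique h hv.1 hv.2,
      SimpleGraph.dist_eq_one_iff_adj.mpr hadj]
    norm_num
  · intro v hv
    rw [hmemB] at hv
    have hne : v ≠ hub := by simp [hhub, Fin.ext_iff]; omega
    have hadj : (Gbar n k).Adj v hub :=
      (gbar_adj n k v hub).mpr ⟨hne, Or.inl ⟨hv.2, by simp [hhub]; omega⟩⟩
    rw [if_pos hne, deg_hub h, deg_clique h hv.1 hv.2,
      SimpleGraph.dist_eq_one_iff_adj.mpr hadj]
    push_cast
    ring
  · intro v hv
    rw [hmemP] at hv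
    have hne : hub ≠ v := by simp [hhub, Fin.ext_iff]; omega
    have hadj : (Gbar n k).Adj hub v :=
      (gbar_adj n k hub v).mpr ⟨hne, Or.inr (Or.inl ⟨by simp [hhub], hv⟩)⟩
    rw [if_pos hne, deg_hub h, deg_pendant h hv,
      SimpleGraph.dist_eq_one_iff_adj.mpr hadj]
    norm_num
  · intro v hv
    rw [hmemP] at hv
    have hne : v ≠ hub := by simp [hhub, Fin.ext_iff]; omega
    have hadj : (Gbar n k).Adj v hub :=
      (gbar_adj n k v hub).mpr ⟨hne, Or.inr (Or.inr ⟨by simp [hhub], hv⟩)⟩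
    rw [if_pos hne, deg_hub h, deg_pendant h hv,
      SimpleGraph.dist_eq_one_iff_adj.mpr hadj]
    push_cast
    ring
  · intro u hu v hv hne
    rw [hmemB] at hu hv
    have hadj : (Gbar n k).Adj u v :=
      (gbar_adj n k u v).mpr ⟨hne, Or.inl ⟨hu.2, hv.2⟩⟩
    rw [if_pos hne, deg_clique h hu.1 hu.2, deg_clique h hv.1 hv.2,
      SimpleGraph.dist_eq_one_iff_adj.mpr hadj]
    norm_num
  · intro u hu v hv
    rw [hmemB] at hu; rw [hmemP] at hv
    have hne : u ≠ v := by simp [Fin.ext_iff]; omega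
    have hna : ¬ (Gbar n k).Adj u v := by
      rw [gbar_adj]; push_neg
      intro _; constructor
      · intro h1; omega
      · constructor
        · intro h1; omega
        · intro h1; omega
    have h1 : (Gbar n k).Adj u hub :=
      (gbar_adj n k u hub).mpr ⟨by simp [hhub, Fin.ext_iff]; omega,
        Or.inl ⟨hu.2, by simp [hhub]; omega⟩⟩
    have h2 : (Gbar n k).Adj hub v :=
      (gbar_adj n k hub v).mpr ⟨by simp [hhub, Fin.ext_iff]; omega,
        Or.inr (Or.inl ⟨by simp [hhub], hv⟩)⟩
    rw [if_pos hne, deg_clique h hu.1 hu.2, deg_pendant h hv,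
      dist_two (Gbar n k) hne hna h1 h2]
    norm_num
  · intro u hu v hv
    rw [hmemP] at hu; rw [hmemB] at hv
    have hne : u ≠ v := by simp [Fin.ext_iff]; omega
    have hna : ¬ (Gbar n k).Adj u v := by
      rw [gbar_adj]; push_neg
      intro _; constructor
      · intro h1; omega
      · constructor
        · intro h1; omega
        · intro h1; omega
    have h1 : (Gbar n k).Adj u hub :=
      (gbar_adj n k u hub).mpr ⟨by simp [hhub, Fin.ext_iff]; omega,
        Or.inr (Or.inr ⟨by simp [hhub], hu⟩)⟩
    have h2 : (Gbar n k).Adj hub v :=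
      (gbar_adj n k hub v).mpr ⟨by simp [hhub, Fin.ext_iff]; omega,
        Or.inl ⟨by simp [hhub]; omega, hv.2⟩⟩
    rw [if_pos hne, deg_pendant h hu, deg_clique h hv.1 hv.2,
      dist_two (Gbar n k) hne hna h1 h2]
    push_cast
    ring
  · intro u hu v hv hne
    rw [hmemP] at hu hv
    have hna : ¬ (Gbar n k).Adj u v := by
      rw [gbar_adj]; push_neg
      intro _; constructor
      · intro h1; omega
      · constructor
        · intro h1; omega
        · intro h1; omega
    have h1 : (Gbar n k).Adj u hub :=
      (gbar_adj n k u hub).mpr ⟨by simp [hhub, Fin.ext_iff]; omega,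
        Or.inr (Or.inr ⟨by simp [hhub], hu⟩)⟩
    have h2 : (Gbar n k).Adj hub v :=
      (gbar_adj n k hub v).mpr ⟨by simp [hhub, Fin.ext_iff]; omega,
        Or.inr (Or.inl ⟨by simp [hhub], hv⟩)⟩
    rw [if_pos hne, deg_pendant h hu, deg_pendant h hv,
      dist_two (Gbar n k) hne hna h1 h2]
    norm_num
end

section
/- In a graph G that maximizes RDD among all connected graphs on n vertices with exactly k cut vertices, every block of G is a complete graph. -/
open Finset

/-- `v` is a cut vertex of `G`: `G` is connected but deleting `v` disconnects it. -/
def IsCutVertex {V : Type*} (G : SimpleGraph V) (v : V) : Prop :=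
  G.Connected ∧ ¬ (G.induce ({v}ᶜ : Set V)).Connected

/-- A block of `G`: a maximal vertex set inducing a connected subgraph with no
cut vertices. -/
def IsBlock {V : Type*} (G : SimpleGraph V) (B : Set V) : Prop :=
  (G.induce B).Connected ∧ (∀ v : B, ¬ IsCutVertex (G.induce B) v) ∧
  ∀ C : Set V, B ⊆ C → (G.induce C).Connected →
    (∀ v : C, ¬ IsCutVertex (G.induce C) v) → B = C

/-!
Adding a missing edge `uv` inside a block keeps the graph connected and does not create or
destroy cut vertices, since `u` and `v` stay joined after deleting any third vertex. It raises
the degrees of `u` and `v` and does not lengthen any distance, so it strictly increases `RDD`.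
Hence in an `RDD`-maximal graph every block is already complete.
-/

namespace SimpleGraph

variable {V : Type*} {G H : SimpleGraph V}

lemma Reachable.of_forall_adj_reachable (h : ∀ a b, H.Adj a b → G.Reachable a b) {a b : V}
    (hab : H.Reachable a b) : G.Reachable a b := by
  obtain ⟨p⟩ := hab
  induction p with
  | nil => rfl
  | cons hadj _ ih => exact (h _ _ hadj).trans ih

lemma induce_sup_edge_connected_iff {u v : V} {s : Set V}
    (h : ∀ (hu : u ∈ s) (hv : v ∈ s), (G.induce s).Reachable ⟨u, hu⟩ ⟨v, hv⟩) :
    ((G ⊔ edge u v).induce s).Connected ↔ (G.induce s).Connected := by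
  refine ⟨fun hc => (connected_iff _).2
    ⟨fun a b => (hc.preconnected a b).of_forall_adj_reachable ?_, hc.nonempty⟩,
    fun hc => hc.mono fun _ _ hab => Or.inl hab⟩
  rintro ⟨x, hx⟩ ⟨y, hy⟩ (hxy | hxy)
  · exact Adj.reachable (G := G.induce s) hxy
  · obtain ⟨⟨rfl, rfl⟩ | ⟨rfl, rfl⟩, -⟩ := (edge_adj _ _ _ _).1 hxy
    · exact h hx hy
    · exact (h hy hx).symm

end SimpleGraph

open SimpleGraph

section CutVertices

variable {V : Type*} {G : SimpleGraph V}

lemma isCutVertex_sup_edge_iff (hG : G.Connected) {u v : V}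
    (h : ∀ w (hu : u ∈ ({w}ᶜ : Set V)) (hv : v ∈ ({w}ᶜ : Set V)),
      (G.induce {w}ᶜ).Reachable ⟨u, hu⟩ ⟨v, hv⟩) (w : V) :
    IsCutVertex (G ⊔ edge u v) w ↔ IsCutVertex G w := by
  simp only [IsCutVertex, induce_sup_edge_connected_iff (h w), hG, hG.mono le_sup_left]

lemma IsBlock.reachable_induce_compl_singleton {B : Set V} (hB : IsBlock G B) {u v w : V}
    (hu : u ∈ B) (hv : v ∈ B) (huw : u ∈ ({w}ᶜ : Set V)) (hvw : v ∈ ({w}ᶜ : Set V)) :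
    (G.induce {w}ᶜ).Reachable ⟨u, huw⟩ ⟨v, hvw⟩ := by
  by_cases hwB : w ∈ B
  · have hB_del : ((G.induce B).induce {⟨w, hwB⟩}ᶜ).Connected := by
      simpa [IsCutVertex, hB.1] using hB.2.1 ⟨w, hwB⟩
    have hmaps : Set.MapsTo (Embedding.induce (G := G) B).toHom ({⟨w, hwB⟩}ᶜ : Set B) {w}ᶜ :=
      fun x hx => by simpa [Subtype.ext_iff] using hx
    exact (hB_del.preconnected ⟨⟨u, hu⟩, by simpa using huw⟩ ⟨⟨v, hv⟩, by simpa using hvw⟩).map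
      (induceHom _ hmaps)
  · exact (hB.1.preconnected ⟨u, hu⟩ ⟨v, hv⟩).map
      (G.induceHomOfLE (Set.subset_compl_singleton_iff.2 hwB)).toHom

end CutVertices

section ReciprocalDegreeDistance

variable {V : Type*} {G H : SimpleGraph V}

open Classical in
noncomputable def rddTerm (G : SimpleGraph V) (u v : V) : ℝ :=
  if u ≠ v then
    (((G.neighborSet u).ncard : ℝ) + ((G.neighborSet v).ncard : ℝ)) / (G.dist u v : ℝ)
  else 0

lemma RDD_eq_sum_rddTerm [Fintype V] (G : SimpleGraph V) :
    RDD G = (∑ u : V, ∑ v : V, rddTerm G u v) / 2 := rfl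

lemma ncard_neighborSet_lt_of_adj [Finite V] (hGH : G ≤ H) {u v : V} (hH : H.Adj u v)
    (hG : ¬ G.Adj u v) : (G.neighborSet u).ncard < (H.neighborSet u).ncard :=
  Set.ncard_lt_ncard ((Set.ssubset_iff_of_subset (neighborSet_mono hGH u)).2 ⟨v, hH, hG⟩)

lemma rddTerm_le_of_le [Finite V] (hG : G.Connected) (hGH : G ≤ H) (u v : V) :
    rddTerm G u v ≤ rddTerm H u v := by
  unfold rddTerm
  split_ifs with huv
  · exact div_le_div₀ (by positivity)
      (add_le_add (mod_cast Set.ncard_le_ncard (neighborSet_mono hGH u))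
        (mod_cast Set.ncard_le_ncard (neighborSet_mono hGH v)))
      (mod_cast (hG.mono hGH).pos_dist_of_ne huv) (mod_cast (hG.preconnected u v).dist_anti hGH)
  · rfl

lemma rddTerm_lt_of_adj [Finite V] (hG : G.Connected) (hGH : G ≤ H) {u v : V} (hH : H.Adj u v)
    (hGuv : ¬ G.Adj u v) : rddTerm G u v < rddTerm H u v := by
  unfold rddTerm
  rw [if_pos hH.ne, if_pos hH.ne]
  refine div_lt_div₀ ?_ (mod_cast (hG.preconnected u v).dist_anti hGH) (by positivity)
    (mod_cast (hG.mono hGH).pos_dist_of_ne hH.ne)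
  exact add_lt_add_of_lt_of_le (mod_cast ncard_neighborSet_lt_of_adj hGH hH hGuv)
    (mod_cast Set.ncard_le_ncard (neighborSet_mono hGH v))

lemma RDD_lt_of_lt [Fintype V] (hG : G.Connected) (hGH : G < H) : RDD G < RDD H := by
  obtain ⟨u, v, hH, hGuv⟩ : ∃ u v, H.Adj u v ∧ ¬ G.Adj u v := by
    by_contra! h
    exact hGH.ne (le_antisymm hGH.le fun u v => h u v)
  rw [RDD_eq_sum_rddTerm, RDD_eq_sum_rddTerm]
  gcongr ?_ / 2
  refine Finset.sum_lt_sum (fun x _ => Finset.sum_le_sum fun y _ => ?_) ⟨u, mem_univ u, ?_⟩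
  · exact rddTerm_le_of_le hG hGH.le x y
  refine Finset.sum_lt_sum (fun y _ => rddTerm_le_of_le hG hGH.le u y) ⟨v, mem_univ v, ?_⟩
  exact rddTerm_lt_of_adj hG hGH.le hH hGuv

end ReciprocalDegreeDistance

theorem blocks_complete_of_rdd_max {V : Type*} [Fintype V] (k : ℕ)
    (G : SimpleGraph V) (hconn : G.Connected)
    (hcut : {v : V | IsCutVertex G v}.ncard = k)
    (hmax : ∀ H : SimpleGraph V, H.Connected →
      {v : V | IsCutVertex H v}.ncard = k → RDD H ≤ RDD G) :
    ∀ B : Set V, IsBlock G B → ∀ u v : V, u ∈ B → v ∈ B → u ≠ v → G.Adj u v := by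
  intro B hB u v hu hv huv
  by_contra hadj
  have hcut_sup : {w : V | IsCutVertex (G ⊔ edge u v) w} = {w : V | IsCutVertex G w} :=
    Set.ext <| isCutVertex_sup_edge_iff hconn
      fun _ => hB.reachable_induce_compl_singleton hu hv
  exact (hmax _ (hconn.mono le_sup_left) (hcut_sup ▸ hcut)).not_gt
    (RDD_lt_of_lt hconn (lt_sup_edge G u v huv hadj))
end

section
/- Let H be formed from disjoint connected graphs G₀, G₁, G₂ with u, v ∈ V(G₀) satisfying N_{G₀}(u)\{v} = N_{G₀}(v)\{u}, by identifying u with a vertex w₁ of G₁ and v with a vertex w₂ of G₂; let H₁ be formed by instead identifying u, w₁, and w₂ into a single vertex. If G₁ and G₂ each have at least 2 vertices, then RDD(H₁) > RDD(H). -/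
open Finset

/-- Glue: attach `G₁` (at `w₁`) to the vertex `p` of `G₀` and `G₂` (at `w₂`) to
the vertex `q` of `G₀`, identifying `w₁` with `p` and `w₂` with `q`. -/
def glue {V₀ V₁ V₂ : Type*} (G₀ : SimpleGraph V₀) (G₁ : SimpleGraph V₁)
    (G₂ : SimpleGraph V₂) (p q : V₀) (w₁ : V₁) (w₂ : V₂) :
    SimpleGraph (V₀ ⊕ ({x : V₁ // x ≠ w₁} ⊕ {x : V₂ // x ≠ w₂})) :=
  SimpleGraph.fromRel (fun a b =>
    match a, b with
    | Sum.inl a, Sum.inl b => G₀.Adj a b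
    | Sum.inr (Sum.inl a), Sum.inr (Sum.inl b) => G₁.Adj a.val b.val
    | Sum.inr (Sum.inr a), Sum.inr (Sum.inr b) => G₂.Adj a.val b.val
    | Sum.inl a, Sum.inr (Sum.inl b) => a = p ∧ G₁.Adj w₁ b.val
    | Sum.inl a, Sum.inr (Sum.inr b) => a = q ∧ G₂.Adj w₂ b.val
    | _, _ => False)


/-!
Write `RDD G = ∑ₓ deg x · R x`, where `R x = ∑_y 1 / d(x, y)` is the reciprocal transmission, and
compare `H` and `H₁` vertex by vertex. Distances in a glued graph add up along the projections onto
`G₀`, `G₁`, `G₂`, and moving `G₂` from `v` to `u` shortens every path between the two branches by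
`δ = d(u, v)`. Hence `R` strictly increases on `G₁ ∖ w₁`, and, since swapping the twins `u` and `v`
is an automorphism of `G₀`, it does not decrease on `G₂ ∖ w₂` and is unchanged on `G₀ ∖ {u, v}`.
At `u` and `v` themselves degrees and distances are traded: writing `E t`, `F t` for what `G₁`,
`G₂` contribute to `R` at distance `t` from their roots, the net gain there is
`deg w₁ · (F 0 - F δ) + deg w₂ · (E 0 - E δ) ≥ 0`.
-/

namespace SimpleGraph

variable {V W : Type*} {G : SimpleGraph V} {G' : SimpleGraph W}

lemma dist_map_le (f : G →g G') {x y : V} (h : G.Reachable x y) :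
    G'.dist (f x) (f y) ≤ G.dist x y := by
  obtain ⟨P, hP⟩ := h.exists_walk_length_eq_dist
  exact hP ▸ (P.length_map f) ▸ dist_le (P.map f)

lemma Iso.dist_apply (f : G ≃g G') (x y : V) : G'.dist (f x) (f y) = G.dist x y := by
  by_cases h : G.Reachable x y
  · refine le_antisymm (dist_map_le f.toHom h) ?_
    simpa using dist_map_le f.symm.toHom (h.map f.toHom)
  · have h' : ¬ G'.Reachable (f x) (f y) := fun h' => h (by simpa using h'.map f.symm.toHom)
    rw [dist_eq_zero_of_not_reachable h, dist_eq_zero_of_not_reachable h']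

lemma le_dist_of_adj_le_one (d : V → V → ℕ) (hself : ∀ x, d x x = 0)
    (htri : ∀ x y z, d x z ≤ d x y + d y z) (hadj : ∀ x y, G.Adj x y → d x y ≤ 1)
    {x y : V} (h : G.Reachable x y) : d x y ≤ G.dist x y := by
  obtain ⟨P, hP⟩ := h.exists_walk_length_eq_dist
  rw [← hP]
  clear hP h
  induction P with
  | nil => simp [hself]
  | cons hxz P ih =>
    exact (htri _ _ _).trans (by simpa [add_comm] using add_le_add (hadj _ _ hxz) ih)

lemma Embedding.ncard_neighborSet (f : G ↪g G') {x : V}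
    (h : G'.neighborSet (f x) ⊆ Set.range f) :
    (G'.neighborSet (f x)).ncard = (G.neighborSet x).ncard := by
  have : G'.neighborSet (f x) = f '' G.neighborSet x := by
    ext z
    refine ⟨fun hz => ?_, fun ⟨y, hy, hyz⟩ => hyz ▸ f.map_adj_iff.2 hy⟩
    obtain ⟨y, rfl⟩ := h hz
    exact ⟨y, f.map_adj_iff.1 hz, rfl⟩
  rw [this, Set.ncard_image_of_injective _ f.injective]

lemma ncard_setOf_adj_subtype_ne (G : SimpleGraph V) (w : V) :
    {c : {x // x ≠ w} | G.Adj w c}.ncard = (G.neighborSet w).ncard := by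
  rw [show {c : {x // x ≠ w} | G.Adj w c} = {c : {x // x ≠ w} | ↑c ∈ G.neighborSet w} from rfl,
    Set.ncard_subtype]
  congr 1
  ext x
  simpa using fun h : G.Adj w x => (G.ne_of_adj h).symm

/-- The term `y = x` contributes `(0 : ℝ)⁻¹ = 0`. -/
noncomputable def recipTransmission [Fintype V] (G : SimpleGraph V) (x : V) : ℝ :=
  ∑ y, ((G.dist x y : ℝ))⁻¹

/-- What the vertices of a branch `G` hanging at `w` contribute to the reciprocal transmission of
a vertex at distance `t` from `w`. -/
noncomputable def shiftedRecipTransmission [Fintype V] [DecidableEq V] (G : SimpleGraph V) (w : V)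
    (t : ℕ) : ℝ :=
  ∑ c : {x // x ≠ w}, ((t : ℝ) + G.dist w c)⁻¹

lemma Connected.shiftedRecipTransmission_strictAnti [Fintype V] [DecidableEq V] {w : V}
    (hG : G.Connected) [Nonempty {x // x ≠ w}] :
    StrictAnti (G.shiftedRecipTransmission w) := fun s t hst => by
  refine Finset.sum_lt_sum_of_nonempty Finset.univ_nonempty fun c _ => ?_
  have : (0 : ℝ) < G.dist w c := mod_cast hG.pos_dist_of_ne c.2.symm
  have : (s : ℝ) < t := mod_cast hst
  exact inv_strictAnti₀ (by positivity) (by linarith)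

def AreTwins (G : SimpleGraph V) (u v : V) : Prop :=
  ∀ x, x ≠ u → x ≠ v → (G.Adj u x ↔ G.Adj v x)

namespace AreTwins

variable {u v : V}

def swapIso [DecidableEq V] (h : G.AreTwins u v) : G ≃g G where
  toEquiv := Equiv.swap u v
  map_rel_iff' {a b} := by
    have := G.adj_comm
    have : ∀ x, ¬ G.Adj x x := fun _ => G.irrefl
    simp only [Equiv.swap_apply_def]
    split_ifs <;> subst_vars <;> grind [AreTwins]

@[simp] lemma swapIso_apply [DecidableEq V] (h : G.AreTwins u v) (x : V) :
    h.swapIso x = Equiv.swap u v x := rfl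

lemma dist_left_eq (h : G.AreTwins u v) {a : V} (hau : a ≠ u) (hav : a ≠ v) :
    G.dist a v = G.dist a u := by
  classical
  simpa [Equiv.swap_apply_of_ne_of_ne hau hav] using h.swapIso.dist_apply a u

lemma sum_comp_dist [Fintype V] (h : G.AreTwins u v) {M : Type*} [AddCommMonoid M]
    (g : ℕ → M) : ∑ b, g (G.dist v b) = ∑ b, g (G.dist u b) := by
  classical
  rw [← Equiv.sum_comp (Equiv.swap u v) fun b => g (G.dist v b)]
  simpa using Finset.sum_congr rfl fun b _ => congrArg g (h.swapIso.dist_apply u b)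

lemma recipTransmission_eq [Fintype V] (h : G.AreTwins u v) :
    G.recipTransmission v = G.recipTransmission u :=
  h.sum_comp_dist fun n => (n : ℝ)⁻¹

lemma ncard_neighborSet_eq (h : G.AreTwins u v) :
    (G.neighborSet v).ncard = (G.neighborSet u).ncard := by
  classical
  simpa using h.swapIso.toEmbedding.ncard_neighborSet (x := u) (by simp)

end AreTwins

end SimpleGraph

open SimpleGraph

lemma Set.ncard_eq_ncard_preimage_inl_add {α β : Type*} [Finite α] [Finite β]
    (s : Set (α ⊕ β)) : s.ncard = (Sum.inl ⁻¹' s).ncard + (Sum.inr ⁻¹' s).ncard := by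
  conv_lhs => rw [← Set.image_preimage_inl_union_image_preimage_inr s]
  rw [Set.ncard_union_eq Set.disjoint_image_inl_image_inr,
    Set.ncard_image_of_injective _ Sum.inl_injective,
    Set.ncard_image_of_injective _ Sum.inr_injective]

lemma RDD_eq_sum_mul_recipTransmission {V : Type*} [Fintype V] (G : SimpleGraph V) :
    RDD G = ∑ x, ((G.neighborSet x).ncard : ℝ) * G.recipTransmission x := by
  classical
  have hterm : ∀ x y, (if x ≠ y then
      (((G.neighborSet x).ncard : ℝ) + (G.neighborSet y).ncard) / (G.dist x y : ℝ) else 0) =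
      (G.neighborSet x).ncard * ((G.dist x y : ℝ))⁻¹ +
        (G.neighborSet y).ncard * ((G.dist y x : ℝ))⁻¹ := by
    intro x y
    split_ifs with h
    · rw [dist_comm]; ring
    · simp [not_not.1 h]
  simp only [RDD, recipTransmission, hterm, Finset.sum_add_distrib, Finset.mul_sum]
  rw [Finset.sum_comm (f := fun x y => ((G.neighborSet y).ncard : ℝ) * _)]
  ring

section Glue

variable {V₀ V₁ V₂ : Type*} {G₀ : SimpleGraph V₀} {G₁ : SimpleGraph V₁} {G₂ : SimpleGraph V₂}
  {p q : V₀} {w₁ : V₁} {w₂ : V₂}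

@[simp] lemma glue_adj_inl_inl {a b : V₀} :
    (glue G₀ G₁ G₂ p q w₁ w₂).Adj (.inl a) (.inl b) ↔ G₀.Adj a b := by
  simpa [glue, G₀.adj_comm b a] using fun h : G₀.Adj a b => h.ne

@[simp] lemma glue_adj_inl_inr_inl {a : V₀} {c : {x // x ≠ w₁}} :
    (glue G₀ G₁ G₂ p q w₁ w₂).Adj (.inl a) (.inr (.inl c)) ↔ a = p ∧ G₁.Adj w₁ c := by
  simp [glue]

@[simp] lemma glue_adj_inl_inr_inr {a : V₀} {c : {x // x ≠ w₂}} :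
    (glue G₀ G₁ G₂ p q w₁ w₂).Adj (.inl a) (.inr (.inr c)) ↔ a = q ∧ G₂.Adj w₂ c := by
  simp [glue]

@[simp] lemma glue_adj_inr_inl_inl {a : V₀} {c : {x // x ≠ w₁}} :
    (glue G₀ G₁ G₂ p q w₁ w₂).Adj (.inr (.inl c)) (.inl a) ↔ a = p ∧ G₁.Adj w₁ c := by
  simp [glue]

@[simp] lemma glue_adj_inr_inr_inl {a : V₀} {c : {x // x ≠ w₂}} :
    (glue G₀ G₁ G₂ p q w₁ w₂).Adj (.inr (.inr c)) (.inl a) ↔ a = q ∧ G₂.Adj w₂ c := by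
  simp [glue]

@[simp] lemma glue_adj_inr_inl_inr_inl {c d : {x // x ≠ w₁}} :
    (glue G₀ G₁ G₂ p q w₁ w₂).Adj (.inr (.inl c)) (.inr (.inl d)) ↔ G₁.Adj c d := by
  simpa [glue, G₁.adj_comm d, Subtype.ext_iff] using fun h : G₁.Adj c d => h.ne

@[simp] lemma glue_adj_inr_inr_inr_inr {c d : {x // x ≠ w₂}} :
    (glue G₀ G₁ G₂ p q w₁ w₂).Adj (.inr (.inr c)) (.inr (.inr d)) ↔ G₂.Adj c d := by
  simpa [glue, G₂.adj_comm d, Subtype.ext_iff] using fun h : G₂.Adj c d => h.ne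

@[simp] lemma glue_not_adj_inr_inl_inr_inr {c : {x // x ≠ w₁}} {d : {x // x ≠ w₂}} :
    ¬ (glue G₀ G₁ G₂ p q w₁ w₂).Adj (.inr (.inl c)) (.inr (.inr d)) := by
  simp [glue]

@[simp] lemma glue_not_adj_inr_inr_inr_inl {c : {x // x ≠ w₁}} {d : {x // x ≠ w₂}} :
    ¬ (glue G₀ G₁ G₂ p q w₁ w₂).Adj (.inr (.inr d)) (.inr (.inl c)) := by
  simp [glue]

variable (G₀ G₁ G₂ p q w₁ w₂) in
def glueEmb₀ : G₀ ↪g glue G₀ G₁ G₂ p q w₁ w₂ :=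
  ⟨⟨Sum.inl, Sum.inl_injective⟩, glue_adj_inl_inl⟩

variable (G₀ G₁ G₂ p q w₁ w₂) in
def glueEmb₁ [DecidableEq V₁] : G₁ ↪g glue G₀ G₁ G₂ p q w₁ w₂ where
  toFun x := if h : x = w₁ then .inl p else .inr (.inl ⟨x, h⟩)
  inj' a b h := by
    dsimp only at h
    split_ifs at h <;> simp_all
  map_rel_iff' {a b} := by
    change (glue G₀ G₁ G₂ p q w₁ w₂).Adj (dite _ _ _) (dite _ _ _) ↔ _
    split_ifs <;> subst_vars <;> simp [G₁.adj_comm]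

variable (G₀ G₁ G₂ p q w₁ w₂) in
def glueEmb₂ [DecidableEq V₂] : G₂ ↪g glue G₀ G₁ G₂ p q w₁ w₂ where
  toFun x := if h : x = w₂ then .inl q else .inr (.inr ⟨x, h⟩)
  inj' a b h := by
    dsimp only at h
    split_ifs at h <;> simp_all
  map_rel_iff' {a b} := by
    change (glue G₀ G₁ G₂ p q w₁ w₂).Adj (dite _ _ _) (dite _ _ _) ↔ _
    split_ifs <;> subst_vars <;> simp [G₂.adj_comm]

@[simp] lemma glueEmb₀_apply (a : V₀) : glueEmb₀ G₀ G₁ G₂ p q w₁ w₂ a = .inl a := rfl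

@[simp] lemma glueEmb₁_apply_self [DecidableEq V₁] :
    glueEmb₁ G₀ G₁ G₂ p q w₁ w₂ w₁ = .inl p := dif_pos rfl

@[simp] lemma glueEmb₁_apply_coe [DecidableEq V₁] (c : {x // x ≠ w₁}) :
    glueEmb₁ G₀ G₁ G₂ p q w₁ w₂ c = .inr (.inl c) := dif_neg c.2

@[simp] lemma glueEmb₂_apply_self [DecidableEq V₂] :
    glueEmb₂ G₀ G₁ G₂ p q w₁ w₂ w₂ = .inl q := dif_pos rfl

@[simp] lemma glueEmb₂_apply_coe [DecidableEq V₂] (c : {x // x ≠ w₂}) :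
    glueEmb₂ G₀ G₁ G₂ p q w₁ w₂ c = .inr (.inr c) := dif_neg c.2

@[simp] def glueProj₀ (p q : V₀) : V₀ ⊕ ({x : V₁ // x ≠ w₁} ⊕ {x : V₂ // x ≠ w₂}) → V₀
  | .inl a => a
  | .inr (.inl _) => p
  | .inr (.inr _) => q

@[simp] def glueProj₁ (w₁ : V₁) : V₀ ⊕ ({x : V₁ // x ≠ w₁} ⊕ {x : V₂ // x ≠ w₂}) → V₁
  | .inr (.inl c) => c
  | _ => w₁

@[simp] def glueProj₂ (w₂ : V₂) : V₀ ⊕ ({x : V₁ // x ≠ w₁} ⊕ {x : V₂ // x ≠ w₂}) → V₂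
  | .inr (.inr c) => c
  | _ => w₂

variable (G₀ G₁ G₂ p q w₁ w₂) in
@[simp] noncomputable def glueDist (x y : V₀ ⊕ ({x : V₁ // x ≠ w₁} ⊕ {x : V₂ // x ≠ w₂})) : ℕ :=
  G₀.dist (glueProj₀ p q x) (glueProj₀ p q y) + G₁.dist (glueProj₁ w₁ x) (glueProj₁ w₁ y) +
    G₂.dist (glueProj₂ w₂ x) (glueProj₂ w₂ y)

variable [DecidableEq V₁] [DecidableEq V₂]

lemma glue_connected (h₀ : G₀.Connected) (h₁ : G₁.Connected) (h₂ : G₂.Connected) :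
    (glue G₀ G₁ G₂ p q w₁ w₂).Connected := by
  have := h₀.nonempty
  refine ⟨fun x y => ?_⟩
  suffices h : ∀ x, (glue G₀ G₁ G₂ p q w₁ w₂).Reachable x (.inl p) from (h x).trans (h y).symm
  have r₀ : ∀ a, (glue G₀ G₁ G₂ p q w₁ w₂).Reachable (.inl a) (.inl p) := fun a => by
    simpa using (h₀ a p).map (glueEmb₀ G₀ G₁ G₂ p q w₁ w₂).toHom
  rintro (a | c | c)
  · exact r₀ a
  · simpa using (h₁ c w₁).map (glueEmb₁ G₀ G₁ G₂ p q w₁ w₂).toHom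
  · refine .trans ?_ (r₀ q)
    simpa using (h₂ c w₂).map (glueEmb₂ G₀ G₁ G₂ p q w₁ w₂).toHom

lemma glue_dist_le_glueDist (h₀ : G₀.Connected) (h₁ : G₁.Connected) (h₂ : G₂.Connected)
    (x y : V₀ ⊕ ({x : V₁ // x ≠ w₁} ⊕ {x : V₂ // x ≠ w₂})) :
    (glue G₀ G₁ G₂ p q w₁ w₂).dist x y ≤ glueDist G₀ G₁ G₂ p q w₁ w₂ x y := by
  set H := glue G₀ G₁ G₂ p q w₁ w₂
  have hH : H.Connected := glue_connected h₀ h₁ h₂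
  have e₀ := fun a b => dist_map_le (glueEmb₀ G₀ G₁ G₂ p q w₁ w₂).toHom (h₀ a b)
  have e₁ := fun a b => dist_map_le (glueEmb₁ G₀ G₁ G₂ p q w₁ w₂).toHom (h₁ a b)
  have e₂ := fun a b => dist_map_le (glueEmb₂ G₀ G₁ G₂ p q w₁ w₂).toHom (h₂ a b)
  have anchor : ∀ x, H.dist x (.inl (glueProj₀ p q x)) ≤
      G₁.dist (glueProj₁ w₁ x) w₁ + G₂.dist (glueProj₂ w₂ x) w₂ := by
    rintro (a | c | c)
    · simp
    · simpa using e₁ c w₁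
    · simpa using e₂ c w₂
  have route : ∀ x y, H.dist x y ≤
      (G₁.dist (glueProj₁ w₁ x) w₁ + G₂.dist (glueProj₂ w₂ x) w₂) +
        G₀.dist (glueProj₀ p q x) (glueProj₀ p q y) +
          (G₁.dist (glueProj₁ w₁ y) w₁ + G₂.dist (glueProj₂ w₂ y) w₂) := fun x y =>
    calc H.dist x y ≤ H.dist x (.inl (glueProj₀ p q x)) +
          H.dist (.inl (glueProj₀ p q x)) (.inl (glueProj₀ p q y)) +
            H.dist (.inl (glueProj₀ p q y)) y := by
          linarith [hH.dist_triangle (u := x) (v := .inl (glueProj₀ p q x)) (w := y),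
            hH.dist_triangle (u := .inl (glueProj₀ p q x)) (v := .inl (glueProj₀ p q y)) (w := y)]
      _ ≤ _ := add_le_add (add_le_add (anchor x) (e₀ _ _)) (dist_comm.trans_le (anchor y))
  obtain (a | c | c) := x <;> obtain (b | d | d) := y
  case inr.inl.inr.inl => simpa using e₁ c d
  case inr.inr.inr.inr => simpa using e₂ c d
  all_goals
    exact (route _ _).trans (by simp [SimpleGraph.dist_comm, add_comm, add_left_comm, add_assoc])

/-- Each edge of the glued graph moves exactly one of the three projections, by one step, so
`glueDist` is also a lower bound. -/
theorem glue_dist (h₀ : G₀.Connected) (h₁ : G₁.Connected) (h₂ : G₂.Connected)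
    (x y : V₀ ⊕ ({x : V₁ // x ≠ w₁} ⊕ {x : V₂ // x ≠ w₂})) :
    (glue G₀ G₁ G₂ p q w₁ w₂).dist x y = glueDist G₀ G₁ G₂ p q w₁ w₂ x y := by
  refine le_antisymm (glue_dist_le_glueDist h₀ h₁ h₂ x y) (le_dist_of_adj_le_one _ (by simp)
    (fun x y z => ?_) (fun x z hxz => ?_) (glue_connected h₀ h₁ h₂ x y))
  · have := h₀.dist_triangle (u := glueProj₀ p q x) (v := glueProj₀ p q y) (w := glueProj₀ p q z)
    have := h₁.dist_triangle (u := glueProj₁ w₁ x) (v := glueProj₁ w₁ y) (w := glueProj₁ w₁ z)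
    have := h₂.dist_triangle (u := glueProj₂ w₂ x) (v := glueProj₂ w₂ y) (w := glueProj₂ w₂ z)
    simp only [glueDist]
    omega
  · obtain (a | c | c) := x <;> obtain (b | d | d) := z <;>
      simp only [glue_adj_inl_inl, glue_adj_inl_inr_inl, glue_adj_inl_inr_inr,
        glue_adj_inr_inl_inl, glue_adj_inr_inr_inl, glue_adj_inr_inl_inr_inl,
        glue_adj_inr_inr_inr_inr, glue_not_adj_inr_inl_inr_inr, glue_not_adj_inr_inr_inr_inl] at hxz
    all_goals
      try obtain ⟨rfl, hxz⟩ := hxz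
      simp [dist_eq_one_iff_adj.2 hxz, dist_eq_one_iff_adj.2 hxz.symm]

end Glue

section GlueDegree

variable {V₀ V₁ V₂ : Type*} {G₀ : SimpleGraph V₀} {G₁ : SimpleGraph V₁} {G₂ : SimpleGraph V₂}
  {p q : V₀} {w₁ : V₁} {w₂ : V₂}

lemma glue_ncard_neighborSet_inl [Finite V₀] [Finite V₁] [Finite V₂] [DecidableEq V₀]
    (a : V₀) :
    ((glue G₀ G₁ G₂ p q w₁ w₂).neighborSet (.inl a)).ncard =
      (G₀.neighborSet a).ncard + (if a = p then (G₁.neighborSet w₁).ncard else 0) +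
        (if a = q then (G₂.neighborSet w₂).ncard else 0) := by
  rw [Set.ncard_eq_ncard_preimage_inl_add, Set.ncard_eq_ncard_preimage_inl_add, ← add_assoc]
  congr 2
  · congr 1; ext; simp
  · rw [show Sum.inl ⁻¹' (Sum.inr ⁻¹' _) = {c : {x // x ≠ w₁} | a = p ∧ G₁.Adj w₁ c} by ext; simp]
    split_ifs with h <;> simp [h, ncard_setOf_adj_subtype_ne]
  · rw [show Sum.inr ⁻¹' (Sum.inr ⁻¹' _) = {c : {x // x ≠ w₂} | a = q ∧ G₂.Adj w₂ c} by ext; simp]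
    split_ifs with h <;> simp [h, ncard_setOf_adj_subtype_ne]

lemma glue_ncard_neighborSet_inr_inl [DecidableEq V₁] (c : {x // x ≠ w₁}) :
    ((glue G₀ G₁ G₂ p q w₁ w₂).neighborSet (.inr (.inl c))).ncard = (G₁.neighborSet c).ncard := by
  refine (glueEmb₁_apply_coe c).symm ▸ (glueEmb₁ G₀ G₁ G₂ p q w₁ w₂).ncard_neighborSet ?_
  rintro (a | d | d) h <;> simp only [mem_neighborSet, glueEmb₁_apply_coe, glue_adj_inr_inl_inl,
    glue_adj_inr_inl_inr_inl, glue_not_adj_inr_inl_inr_inr] at h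
  · exact ⟨w₁, by simp [h.1]⟩
  · exact ⟨d, by simp⟩

lemma glue_ncard_neighborSet_inr_inr [DecidableEq V₂] (c : {x // x ≠ w₂}) :
    ((glue G₀ G₁ G₂ p q w₁ w₂).neighborSet (.inr (.inr c))).ncard = (G₂.neighborSet c).ncard := by
  refine (glueEmb₂_apply_coe c).symm ▸ (glueEmb₂ G₀ G₁ G₂ p q w₁ w₂).ncard_neighborSet ?_
  rintro (a | d | d) h <;> simp only [mem_neighborSet, glueEmb₂_apply_coe, glue_adj_inr_inr_inl,
    glue_adj_inr_inr_inr_inr, glue_not_adj_inr_inr_inr_inl] at h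
  · exact ⟨w₂, by simp [h.1]⟩
  · exact ⟨d, by simp⟩

end GlueDegree

section GlueRecipTransmission

variable {V₀ V₁ V₂ : Type*} [Fintype V₀] [Fintype V₁] [Fintype V₂] [DecidableEq V₁]
  [DecidableEq V₂] {G₀ : SimpleGraph V₀} {G₁ : SimpleGraph V₁} {G₂ : SimpleGraph V₂}
  {p q : V₀} {w₁ : V₁} {w₂ : V₂}

lemma glue_recipTransmission_inl (h₀ : G₀.Connected) (h₁ : G₁.Connected) (h₂ : G₂.Connected)
    (a : V₀) :
    (glue G₀ G₁ G₂ p q w₁ w₂).recipTransmission (.inl a) = G₀.recipTransmission a +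
      G₁.shiftedRecipTransmission w₁ (G₀.dist a p) +
        G₂.shiftedRecipTransmission w₂ (G₀.dist a q) := by
  simp [recipTransmission, shiftedRecipTransmission, Fintype.sum_sum_type, glue_dist h₀ h₁ h₂,
    add_assoc]

lemma glue_recipTransmission_inr_inl (h₀ : G₀.Connected) (h₁ : G₁.Connected)
    (h₂ : G₂.Connected) (c : {x // x ≠ w₁}) :
    (glue G₀ G₁ G₂ p q w₁ w₂).recipTransmission (.inr (.inl c)) =
      ∑ b, ((G₀.dist p b : ℝ) + G₁.dist c w₁)⁻¹ + ∑ d : {x // x ≠ w₁}, ((G₁.dist c d : ℝ))⁻¹ +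
        G₂.shiftedRecipTransmission w₂ (G₀.dist p q + G₁.dist c w₁) := by
  simp [recipTransmission, shiftedRecipTransmission, Fintype.sum_sum_type, glue_dist h₀ h₁ h₂,
    add_assoc]

lemma glue_recipTransmission_inr_inr (h₀ : G₀.Connected) (h₁ : G₁.Connected)
    (h₂ : G₂.Connected) (c : {x // x ≠ w₂}) :
    (glue G₀ G₁ G₂ p q w₁ w₂).recipTransmission (.inr (.inr c)) =
      ∑ b, ((G₀.dist q b : ℝ) + G₂.dist c w₂)⁻¹ +
        G₁.shiftedRecipTransmission w₁ (G₀.dist q p + G₂.dist c w₂) +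
          ∑ d : {x // x ≠ w₂}, ((G₂.dist c d : ℝ))⁻¹ := by
  simp [recipTransmission, shiftedRecipTransmission, Fintype.sum_sum_type, glue_dist h₀ h₁ h₂,
    add_assoc, add_comm (G₂.dist _ _ : ℝ)]

end GlueRecipTransmission

/-- The contributions of `u` and `v` to `RDD` before and after moving `G₂` from `v` to `u`: `κ` and
`α` are the degree and reciprocal transmission of `u` (equivalently `v`) in `G₀`, `rᵢ` is the degree
of `wᵢ` in `Gᵢ`, and `E₀, E₁` (`F₀, F₁`) is what `G₁` (`G₂`) contributes at distance `0`, `d(u, v)`.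
-/
lemma twin_transfer_le {κ α r₁ r₂ E₀ E₁ F₀ F₁ : ℝ} (hr₁ : 0 ≤ r₁) (hr₂ : 0 ≤ r₂) (hE : E₁ ≤ E₀)
    (hF : F₁ ≤ F₀) :
    (κ + r₁) * (α + E₀ + F₁) + (κ + r₂) * (α + E₁ + F₀) ≤
      (κ + r₁ + r₂) * (α + E₀ + F₀) + κ * (α + E₁ + F₁) := by
  linear_combination mul_nonneg hr₁ (sub_nonneg.2 hF) + mul_nonneg hr₂ (sub_nonneg.2 hE)

section Transfer

variable {V₀ V₁ V₂ : Type*} [Fintype V₀] [Fintype V₁] [Fintype V₂] [DecidableEq V₁]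
  [DecidableEq V₂] {G₀ : SimpleGraph V₀} {G₁ : SimpleGraph V₁} {G₂ : SimpleGraph V₂}
  {u v : V₀} {w₁ : V₁} {w₂ : V₂}

lemma glue_sum_inl_le (h₀ : G₀.Connected) (h₁ : G₁.Connected) (h₂ : G₂.Connected)
    (huv : u ≠ v) (htwin : G₀.AreTwins u v) [Nonempty {x // x ≠ w₁}] [Nonempty {x // x ≠ w₂}] :
    ∑ a, ((glue G₀ G₁ G₂ u v w₁ w₂).neighborSet (.inl a)).ncard *
        (glue G₀ G₁ G₂ u v w₁ w₂).recipTransmission (.inl a) ≤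
      ∑ a, ((glue G₀ G₁ G₂ u u w₁ w₂).neighborSet (.inl a)).ncard *
        (glue G₀ G₁ G₂ u u w₁ w₂).recipTransmission (.inl a) := by
  classical
  rw [← sub_nonneg, ← Finset.sum_sub_distrib, Fintype.sum_eq_add u v huv]
  · have hδ : 0 < G₀.dist u v := h₀.pos_dist_of_ne huv
    have hE := h₁.shiftedRecipTransmission_strictAnti (w := w₁) hδ
    have hF := h₂.shiftedRecipTransmission_strictAnti (w := w₂) hδ
    have := twin_transfer_le (κ := (G₀.neighborSet u).ncard) (α := G₀.recipTransmission u)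
      (r₁ := (G₁.neighborSet w₁).ncard) (r₂ := (G₂.neighborSet w₂).ncard)
      (Nat.cast_nonneg _) (Nat.cast_nonneg _) hE.le hF.le
    simp only [glue_ncard_neighborSet_inl, glue_recipTransmission_inl h₀ h₁ h₂, huv, huv.symm,
      ↓reduceIte, Nat.cast_add, dist_self, add_zero, dist_comm (u := v),
      htwin.ncard_neighborSet_eq, htwin.recipTransmission_eq, ge_iff_le]
    linarith
  · rintro a ⟨hau, hav⟩
    simp [glue_ncard_neighborSet_inl, glue_recipTransmission_inl h₀ h₁ h₂, hau, hav,
      htwin.dist_left_eq hau hav]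

lemma glue_sum_inr_inl_lt (h₀ : G₀.Connected) (h₁ : G₁.Connected) (h₂ : G₂.Connected)
    (huv : u ≠ v) [Nonempty {x // x ≠ w₁}] [Nonempty {x // x ≠ w₂}] :
    ∑ c : {x // x ≠ w₁}, ((glue G₀ G₁ G₂ u v w₁ w₂).neighborSet (.inr (.inl c))).ncard *
        (glue G₀ G₁ G₂ u v w₁ w₂).recipTransmission (.inr (.inl c)) <
      ∑ c : {x // x ≠ w₁}, ((glue G₀ G₁ G₂ u u w₁ w₂).neighborSet (.inr (.inl c))).ncard *
        (glue G₀ G₁ G₂ u u w₁ w₂).recipTransmission (.inr (.inl c)) := by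
  refine Finset.sum_lt_sum_of_nonempty Finset.univ_nonempty fun c _ => ?_
  have : Nontrivial V₁ := ⟨⟨c, w₁, c.2⟩⟩
  have hdeg : 0 < (G₁.neighborSet c).ncard :=
    (Set.ncard_pos (Set.toFinite _)).2 (by simp [h₁.preconnected])
  have hδ : 0 < G₀.dist u v := h₀.pos_dist_of_ne huv
  rw [glue_ncard_neighborSet_inr_inl, glue_ncard_neighborSet_inr_inl,
    glue_recipTransmission_inr_inl h₀ h₁ h₂, glue_recipTransmission_inr_inl h₀ h₁ h₂]
  have := h₂.shiftedRecipTransmission_strictAnti (w := w₂)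
    (show G₀.dist u u + G₁.dist c w₁ < G₀.dist u v + G₁.dist c w₁ by simpa using hδ)
  exact mul_lt_mul_of_pos_left (by linarith) (mod_cast hdeg)

lemma glue_sum_inr_inr_le (h₀ : G₀.Connected) (h₁ : G₁.Connected) (h₂ : G₂.Connected)
    (huv : u ≠ v) (htwin : G₀.AreTwins u v) [Nonempty {x // x ≠ w₁}] :
    ∑ c : {x // x ≠ w₂}, ((glue G₀ G₁ G₂ u v w₁ w₂).neighborSet (.inr (.inr c))).ncard *
        (glue G₀ G₁ G₂ u v w₁ w₂).recipTransmission (.inr (.inr c)) ≤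
      ∑ c : {x // x ≠ w₂}, ((glue G₀ G₁ G₂ u u w₁ w₂).neighborSet (.inr (.inr c))).ncard *
        (glue G₀ G₁ G₂ u u w₁ w₂).recipTransmission (.inr (.inr c)) := by
  refine Finset.sum_le_sum fun c _ => ?_
  have hδ : 0 < G₀.dist v u := h₀.pos_dist_of_ne huv.symm
  rw [glue_ncard_neighborSet_inr_inr, glue_ncard_neighborSet_inr_inr,
    glue_recipTransmission_inr_inr h₀ h₁ h₂, glue_recipTransmission_inr_inr h₀ h₁ h₂,
    htwin.sum_comp_dist fun n => ((n : ℝ) + G₂.dist c w₂)⁻¹]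
  have := h₁.shiftedRecipTransmission_strictAnti (w := w₁)
    (show G₀.dist u u + G₂.dist c w₂ < G₀.dist v u + G₂.dist c w₂ by simpa using hδ)
  exact mul_le_mul_of_nonneg_left (by linarith) (Nat.cast_nonneg _)

end Transfer

theorem rdd_glue_lt {V₀ V₁ V₂ : Type*} [Fintype V₀] [Fintype V₁] [Fintype V₂]
    [DecidableEq V₁] [DecidableEq V₂]
    (G₀ : SimpleGraph V₀) (G₁ : SimpleGraph V₁) (G₂ : SimpleGraph V₂)
    (h₀ : G₀.Connected) (h₁ : G₁.Connected) (h₂ : G₂.Connected)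
    (u v : V₀) (huv : u ≠ v)
    (htwin : ∀ x : V₀, x ≠ u → x ≠ v → (G₀.Adj u x ↔ G₀.Adj v x))
    (w₁ : V₁) (w₂ : V₂)
    (hV₁ : 2 ≤ Fintype.card V₁) (hV₂ : 2 ≤ Fintype.card V₂) :
    RDD (glue G₀ G₁ G₂ u v w₁ w₂) < RDD (glue G₀ G₁ G₂ u u w₁ w₂) := by
  obtain ⟨x₁, hx₁⟩ := Fintype.exists_ne_of_one_lt_card hV₁ w₁
  obtain ⟨x₂, hx₂⟩ := Fintype.exists_ne_of_one_lt_card hV₂ w₂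
  have : Nonempty {x // x ≠ w₁} := ⟨⟨x₁, hx₁⟩⟩
  have : Nonempty {x // x ≠ w₂} := ⟨⟨x₂, hx₂⟩⟩
  simp only [RDD_eq_sum_mul_recipTransmission, Fintype.sum_sum_type]
  exact add_lt_add_of_le_of_lt (glue_sum_inl_le h₀ h₁ h₂ huv htwin)
    (add_lt_add_of_lt_of_le (glue_sum_inr_inl_lt h₀ h₁ h₂ huv)
      (glue_sum_inr_inr_le h₀ h₁ h₂ huv htwin))
end
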